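/- Let $T > 0$ and let $h : \mathbb{Z}^d \to \mathbb{C}$ be a function (thought of as Fourier coefficients of $F^{1}-F^{2}$ and $G^{1}-G^{2}$, denoted $a_\xi$, $b_\xi$). Suppose for all $\xi_1, \xi_2 \in \mathbb{Z}^d \setminus \{0\}$ with $\xi = \xi_1 + \xi_2$ we have $\frac{1 - e^{-4\pi^2(|\xi_1|^2+|\xi_2|^2)T}}{4\pi^2(|\xi_1|^2+|\xi_2|^2)} a_\xi = e^{-4\pi^2(|\xi_1|^2+|\xi_2|^2)T} b_\xi$. If for each $\xi$ there exist two such decompositions with distinct values of $|\xi_1|^2 + |\xi_2|^2$, then $a_\xi = b_\xi = 0$ for all such $\xi$. -/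
import Mathlib


/-- Squared norm of a lattice vector. -/
noncomputable def sqnorm {d : ℕ} (ξ : Fin d → ℤ) : ℝ := ∑ k, ((ξ k : ℝ)) ^ 2

lemma sqnorm_pos {d : ℕ} {ξ : Fin d → ℤ} (hξ : ξ ≠ 0) : 0 < sqnorm ξ := by
  obtain ⟨k, hk⟩ := Function.ne_iff.mp hξ
  refine Finset.sum_pos' (fun i _ => sq_nonneg _) ⟨k, Finset.mem_univ k, ?_⟩
  have : (ξ k : ℝ) ≠ 0 := Int.cast_ne_zero.mpr hk
  positivity

lemma gmono {T : ℝ} (hT : 0 < T) {s s' : ℝ} (hs : 0 < s) (hs' : 0 < s')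
    (hss : s < s') : (Real.exp (s * T) - 1) / s < (Real.exp (s' * T) - 1) / s' := by
  have h0 : (0 : ℝ) ∈ Set.univ := trivial
  have key := strictConvexOn_exp.secant_strict_mono h0 (Set.mem_univ (s * T))
    (Set.mem_univ (s' * T)) (by positivity) (by positivity)
    (by exact mul_lt_mul_of_pos_right hss hT)
  rw [Real.exp_zero, sub_zero, sub_zero] at key
  have h1 : (Real.exp (s * T) - 1) / s = T * ((Real.exp (s * T) - 1) / (s * T)) := by
    field_simp
  have h2 : (Real.exp (s' * T) - 1) / s' = T * ((Real.exp (s' * T) - 1) / (s' * T)) := by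
    field_simp
  rw [h1, h2]
  exact mul_lt_mul_of_pos_left key hT

theorem stmt4 {d : ℕ} (T : ℝ) (hT : 0 < T)
    (a b : (Fin d → ℤ) → ℂ) (ξ : Fin d → ℤ)
    (h : ∀ ξ₁ ξ₂ : Fin d → ℤ, ξ₁ ≠ 0 → ξ₂ ≠ 0 → ξ₁ + ξ₂ = ξ →
      (((1 - Real.exp (-(4 * Real.pi ^ 2 * (sqnorm ξ₁ + sqnorm ξ₂)) * T))
          / (4 * Real.pi ^ 2 * (sqnorm ξ₁ + sqnorm ξ₂)) : ℝ) : ℂ) * a ξ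
        = ((Real.exp (-(4 * Real.pi ^ 2 * (sqnorm ξ₁ + sqnorm ξ₂)) * T) : ℝ) : ℂ) * b ξ)
    (hex : ∃ ξ₁ ξ₂ ξ₁' ξ₂' : Fin d → ℤ,
      ξ₁ ≠ 0 ∧ ξ₂ ≠ 0 ∧ ξ₁' ≠ 0 ∧ ξ₂' ≠ 0 ∧
      ξ₁ + ξ₂ = ξ ∧ ξ₁' + ξ₂' = ξ ∧
      sqnorm ξ₁ + sqnorm ξ₂ ≠ sqnorm ξ₁' + sqnorm ξ₂') :
    a ξ = 0 ∧ b ξ = 0 := by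
  obtain ⟨ξ₁, ξ₂, ξ₁', ξ₂', h1, h2, h1', h2', hsum, hsum', hne⟩ := hex
  have pi2 : (0:ℝ) < 4 * Real.pi ^ 2 := by positivity
  -- general step: turn the hypothesis into g(s) * a = b
  have step : ∀ ζ₁ ζ₂ : Fin d → ℤ, ζ₁ ≠ 0 → ζ₂ ≠ 0 → ζ₁ + ζ₂ = ξ →
      (((Real.exp (4 * Real.pi ^ 2 * (sqnorm ζ₁ + sqnorm ζ₂) * T) - 1)
        / (4 * Real.pi ^ 2 * (sqnorm ζ₁ + sqnorm ζ₂)) : ℝ) : ℂ) * a ξ = b ξ := by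
    intro ζ₁ ζ₂ hz1 hz2 hz
    have hq : 0 < sqnorm ζ₁ + sqnorm ζ₂ := by
      have := sqnorm_pos hz1; have := sqnorm_pos hz2; linarith
    set s : ℝ := 4 * Real.pi ^ 2 * (sqnorm ζ₁ + sqnorm ζ₂) with hs
    have hspos : 0 < s := by positivity
    have H := h ζ₁ ζ₂ hz1 hz2 hz
    have hE : Real.exp (-s * T) ≠ 0 := Real.exp_ne_zero _
    have hE' : ((Real.exp (-s * T) : ℝ) : ℂ) ≠ 0 := by exact_mod_cast hE
    have e1 : Real.exp (-(s * T)) * Real.exp (s * T) = 1 := by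
      rw [← Real.exp_add]; ring_nf; exact Real.exp_zero
    have hid : Real.exp (-s * T) * ((Real.exp (s * T) - 1) / s)
        = (1 - Real.exp (-s * T)) / s := by
      rw [neg_mul]
      field_simp
      linear_combination e1
    apply mul_left_cancel₀ hE'
    rw [← H, ← mul_assoc, ← Complex.ofReal_mul, hid]
  have A := step ξ₁ ξ₂ h1 h2 hsum
  have B := step ξ₁' ξ₂' h1' h2' hsum'
  set q : ℝ := sqnorm ξ₁ + sqnorm ξ₂ with hq
  set q' : ℝ := sqnorm ξ₁' + sqnorm ξ₂' with hq'
  have hqpos : 0 < q := by have := sqnorm_pos h1; have := sqnorm_pos h2; simp [hq]; linarith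
  have hqpos' : 0 < q' := by have := sqnorm_pos h1'; have := sqnorm_pos h2'; simp [hq']; linarith
  have hspos : 0 < 4 * Real.pi ^ 2 * q := by positivity
  have hspos' : 0 < 4 * Real.pi ^ 2 * q' := by positivity
  have hcne : (Real.exp (4 * Real.pi ^ 2 * q * T) - 1) / (4 * Real.pi ^ 2 * q)
      ≠ (Real.exp (4 * Real.pi ^ 2 * q' * T) - 1) / (4 * Real.pi ^ 2 * q') := by
    rcases lt_or_gt_of_ne hne with hlt | hlt
    · exact ne_of_lt (gmono hT hspos hspos' (mul_lt_mul_of_pos_left hlt pi2))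
    · exact (ne_of_lt (gmono hT hspos' hspos (mul_lt_mul_of_pos_left hlt pi2))).symm
  have ha : a ξ = 0 := by
    by_contra hane
    apply hcne
    have : (((Real.exp (4 * Real.pi ^ 2 * q * T) - 1) / (4 * Real.pi ^ 2 * q) : ℝ) : ℂ)
        = (((Real.exp (4 * Real.pi ^ 2 * q' * T) - 1) / (4 * Real.pi ^ 2 * q') : ℝ) : ℂ) := by
      have := A.trans B.symm
      exact mul_right_cancel₀ hane this
    exact_mod_cast this
  refine ⟨ha, ?_⟩
  rw [← A, ha, mul_zero]
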